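/- arXiv:math/0108216 — 3 statements merged into one kernel-verified Lean document; each statement's English description precedes it below -/
import Mathlib

section
/- Let Γ be a finite abelian group, G a subgroup of Γ, χ : G → ℂˣ a group homomorphism, and f : Γ → ℂ any function. Choose a section s : Γ/G → Γ of the quotient map (so s(c) lies in the coset c for each c ∈ Γ/G). Let M be the square matrix indexed by Γ/G with entries M(c, c′) = Σ_{τ ∈ G} χ(τ) · f(τ · s(c′) · s(c)⁻¹). Then det M = ∏_{ψ} ( Σ_{γ ∈ Γ} f(γ) · ψ(γ) ), where the product runs over all group homomorphisms ψ : Γ → ℂˣ whose restriction to G equals χ. -/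
private lemma dd_sum_eq_zero {A : Type*} [CommGroup A] [Fintype A] {φ : A →* ℂˣ}
    (h : φ ≠ 1) : ∑ a : A, (φ a : ℂ) = 0 := by
  obtain ⟨b, hb⟩ : ∃ b, φ b ≠ 1 := by
    by_contra hc; push_neg at hc
    exact h (MonoidHom.ext fun a => hc a)
  by_contra hsne
  have key : (φ b : ℂ) * ∑ a : A, (φ a : ℂ) = 1 * ∑ a : A, (φ a : ℂ) := by
    rw [one_mul, Finset.mul_sum]
    exact Fintype.sum_bijective (fun a => b * a) (Group.mulLeft_bijective b) _ _
      (fun a => by rw [map_mul, Units.val_mul])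
  exact hb (Units.val_eq_one.mp (mul_right_cancel₀ hsne key))

private lemma dd_card_hom (A : Type*) [CommGroup A] [Finite A] :
    Nat.card (A →* ℂˣ) = Nat.card A := by
  have : NeZero ((Monoid.exponent A : ℂ)) :=
    ⟨Nat.cast_ne_zero.mpr Monoid.exponent_ne_zero_of_finite⟩
  exact Nat.card_congr (CommGroup.monoidHom_mulEquiv_of_hasEnoughRootsOfUnity A ℂ).some.toEquiv

private def dd_res {Γ : Type*} [CommGroup Γ] (G : Subgroup Γ) :
    (Γ →* ℂˣ) →* (G →* ℂˣ) where
  toFun ψ := ψ.comp G.subtype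
  map_one' := rfl
  map_mul' _ _ := rfl

private def dd_kerEquiv {Γ : Type*} [CommGroup Γ] (G : Subgroup Γ) :
    ((Γ ⧸ G) →* ℂˣ) ≃ (dd_res G).ker where
  toFun φ := ⟨φ.comp (QuotientGroup.mk' G), by
    rw [MonoidHom.mem_ker]
    ext τ
    simp [dd_res, (QuotientGroup.eq_one_iff (τ : Γ)).mpr τ.2]⟩
  invFun ψ := QuotientGroup.lift G ψ.1 (fun g hg => by
    have h := MonoidHom.mem_ker.mp ψ.2
    have := DFunLike.congr_fun h (⟨g, hg⟩ : G)
    exact this)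
  left_inv φ := by
    ext x
    simp [QuotientGroup.lift_mk', QuotientGroup.lift_mk]
    rfl
  right_inv ψ := by
    apply Subtype.ext
    ext γ
    simp [QuotientGroup.lift_mk', QuotientGroup.lift_mk]
    rfl

private lemma dd_exists_ext {Γ : Type*} [CommGroup Γ] [Finite Γ] (G : Subgroup Γ)
    (χ : G →* ℂˣ) : ∃ ψ : Γ →* ℂˣ, dd_res G ψ = χ := by
  haveI hfin : Finite (Γ →* ℂˣ) :=
    Nat.finite_of_card_ne_zero (by rw [dd_card_hom]; exact Nat.card_pos.ne')
  have hker : Nat.card (dd_res G).ker = Nat.card (Γ ⧸ G) := by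
    rw [← Nat.card_congr (dd_kerEquiv G), dd_card_hom]
  have h1 : Nat.card ((Γ →* ℂˣ) ⧸ (dd_res G).ker) = Nat.card (dd_res G).range :=
    Nat.card_congr (QuotientGroup.quotientKerEquivRange (dd_res G)).toEquiv
  have h2 : Nat.card (Γ →* ℂˣ)
      = Nat.card ((Γ →* ℂˣ) ⧸ (dd_res G).ker) * Nat.card (dd_res G).ker :=
    Subgroup.card_eq_card_quotient_mul_card_subgroup _
  have h3 : Nat.card Γ = Nat.card (Γ ⧸ G) * Nat.card G :=
    Subgroup.card_eq_card_quotient_mul_card_subgroup _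
  have hq : 0 < Nat.card (Γ ⧸ G) := Nat.card_pos
  have hr : Nat.card (dd_res G).range = Nat.card (G →* ℂˣ) := by
    rw [dd_card_hom]
    apply Nat.eq_of_mul_eq_mul_right hq
    rw [← h1, ← hker, ← h2, dd_card_hom, h3, hker, Nat.mul_comm]
  haveI : Finite (↥G →* ℂˣ) :=
    Nat.finite_of_card_ne_zero (by rw [dd_card_hom]; exact Nat.card_pos.ne')
  haveI : Finite (dd_res G).range := Subtype.finite
  have htop : (dd_res G).range = ⊤ := Subgroup.eq_top_of_card_eq _ hr
  exact MonoidHom.range_eq_top.mp htop χ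

/-- Generalized Dedekind determinant relation: for a finite abelian group `Γ`, a subgroup `G`
with character `χ : G →* ℂˣ`, any `f : Γ → ℂ`, and a section `s` of `Γ → Γ ⧸ G`, the
determinant of the matrix `(c, c') ↦ Σ_{τ ∈ G} χ(τ) f(τ s(c') s(c)⁻¹)` equals the product,
over all characters `ψ : Γ →* ℂˣ` restricting to `χ` on `G`, of `Σ_γ f(γ) ψ(γ)`. -/
theorem dedekind_determinant
    (Γ : Type*) [CommGroup Γ] [Fintype Γ] [DecidableEq Γ]
    (G : Subgroup Γ) [Fintype G] [Fintype (Γ ⧸ G)] [DecidableEq (Γ ⧸ G)]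
    (χ : G →* ℂˣ) (f : Γ → ℂ)
    (s : Γ ⧸ G → Γ) (hs : ∀ c : Γ ⧸ G, QuotientGroup.mk (s c) = c)
    (Ψ : Finset (Γ →* ℂˣ)) (hΨ : ∀ ψ : Γ →* ℂˣ, ψ ∈ Ψ ↔ ∀ τ : G, ψ (↑τ) = χ τ)
    (M : Matrix (Γ ⧸ G) (Γ ⧸ G) ℂ)
    (hM : ∀ c c' : Γ ⧸ G, M c c' = ∑ τ : G, (χ τ : ℂ) * f (↑τ * s c' * (s c)⁻¹)) :
    M.det = ∏ ψ ∈ Ψ, ∑ γ : Γ, f γ * (ψ γ : ℂ) := by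
  classical
  obtain ⟨ψ₀, hψ₀⟩ := dd_exists_ext G χ
  have hψ₀' : ∀ τ : G, ψ₀ ↑τ = χ τ := fun τ => DFunLike.congr_fun hψ₀ τ
  -- the equivalence between Ψ and characters of the quotient
  have hmemker : ∀ (ψ : Γ →* ℂˣ), ψ ∈ Ψ → ∀ g ∈ G, (ψ₀⁻¹ * ψ) g = 1 := by
    intro ψ hmem g hg
    have h1 := hψ₀' ⟨g, hg⟩
    have h2 := ((hΨ _).mp hmem) ⟨g, hg⟩
    simp only [MonoidHom.mul_apply, MonoidHom.inv_apply]
    rw [h1, h2, inv_mul_cancel]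
  let E : {x // x ∈ Ψ} ≃ ((Γ ⧸ G) →* ℂˣ) :=
  { toFun := fun p => QuotientGroup.lift G (ψ₀⁻¹ * p.1)
      (fun g hg => MonoidHom.mem_ker.mpr (hmemker p.1 p.2 g hg))
    invFun := fun φ => ⟨ψ₀ * φ.comp (QuotientGroup.mk' G), (hΨ _).mpr fun τ => by
      simp only [MonoidHom.mul_apply, MonoidHom.coe_comp, Function.comp_apply,
        QuotientGroup.coe_mk']
      rw [(QuotientGroup.eq_one_iff (τ : Γ)).mpr τ.2, map_one, mul_one, hψ₀' τ]⟩
    left_inv := fun p => Subtype.ext (by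
      ext γ
      simp [QuotientGroup.lift_mk'])
    right_inv := fun φ => by
      ext x
      simp [QuotientGroup.lift_mk'] }
  have hcard : Fintype.card (Γ ⧸ G) = Fintype.card {x // x ∈ Ψ} := by
    rw [← Nat.card_eq_fintype_card, ← Nat.card_eq_fintype_card, Nat.card_congr E,
      dd_card_hom]
  let e : (Γ ⧸ G) ≃ {x // x ∈ Ψ} := Fintype.equivOfCardEq hcard
  -- matrices
  set L : (Γ →* ℂˣ) → ℂ := fun ψ => ∑ γ : Γ, f γ * (ψ γ : ℂ) with hL
  set P : Matrix (Γ ⧸ G) (Γ ⧸ G) ℂ := fun c j => ((e j : Γ →* ℂˣ) (s c) : ℂ) with hP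
  set D : Matrix (Γ ⧸ G) (Γ ⧸ G) ℂ := Matrix.diagonal fun j => L (e j) with hD
  set Q : Matrix (Γ ⧸ G) (Γ ⧸ G) ℂ := fun j c => ((((e j : Γ →* ℂˣ) (s c))⁻¹ : ℂˣ) : ℂ)
    with hQ
  -- eigenvector relation
  have hMP : M * P = P * D := by
    ext c j
    rw [Matrix.mul_apply, hD, Matrix.mul_diagonal]
    set ψ : Γ →* ℂˣ := (e j : Γ →* ℂˣ) with hψdef
    have hmem : ∀ τ : G, ψ ↑τ = χ τ := (hΨ _).mp (e j).2
    have hbij : Function.Bijective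
        (fun p : (Γ ⧸ G) × G => (p.2 : Γ) * s p.1 * (s c)⁻¹) := by
      constructor
      · rintro ⟨c₁, τ₁⟩ ⟨c₂, τ₂⟩ h
        simp only at h
        have h' : (τ₁ : Γ) * s c₁ = (τ₂ : Γ) * s c₂ := mul_right_cancel h
        have hc : c₁ = c₂ := by
          have := congrArg (QuotientGroup.mk (s := G)) h'
          rwa [QuotientGroup.mk_mul, QuotientGroup.mk_mul,
            (QuotientGroup.eq_one_iff (τ₁ : Γ)).mpr τ₁.2,
            (QuotientGroup.eq_one_iff (τ₂ : Γ)).mpr τ₂.2, one_mul, one_mul,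
            hs c₁, hs c₂] at this
        subst hc
        have : (τ₁ : Γ) = τ₂ := mul_right_cancel h'
        exact Prod.ext rfl (Subtype.ext this)
      · intro γ
        have hmem' : γ * s c * (s (QuotientGroup.mk (γ * s c)))⁻¹ ∈ G := by
          rw [← QuotientGroup.eq_one_iff]
          rw [QuotientGroup.mk_mul, QuotientGroup.mk_inv, hs, QuotientGroup.mk_mul]
          exact mul_inv_cancel _
        refine ⟨⟨QuotientGroup.mk (γ * s c), ⟨_, hmem'⟩⟩, ?_⟩
        simp only
        group
    calc ∑ c', M c c' * P c' j
        = ∑ c', ∑ τ : G, ((χ τ : ℂ) * f (↑τ * s c' * (s c)⁻¹)) * (ψ (s c') : ℂ) := by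
          simp_rw [hM, Finset.sum_mul]
          rfl
      _ = ∑ p : (Γ ⧸ G) × G,
            ((χ p.2 : ℂ) * f (↑p.2 * s p.1 * (s c)⁻¹)) * (ψ (s p.1) : ℂ) :=
          by rw [Fintype.sum_prod_type]
      _ = ∑ γ : Γ, f γ * (ψ γ : ℂ) * (ψ (s c) : ℂ) := by
          refine Fintype.sum_bijective _ hbij _ _ ?_
          rintro ⟨c', τ⟩
          simp only
          have h1 : ((τ : Γ) * s c' * (s c)⁻¹) * s c = (τ : Γ) * s c' := by group
          have h2 : (ψ ((τ : Γ) * s c' * (s c)⁻¹) : ℂ) * (ψ (s c) : ℂ)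
              = (χ τ : ℂ) * (ψ (s c') : ℂ) := by
            rw [← Units.val_mul, ← map_mul, h1, map_mul, Units.val_mul, hmem τ]
          linear_combination f ((τ : Γ) * s c' * (s c)⁻¹) * h2.symm
      _ = P c j * L ψ := by
          rw [← Finset.sum_mul, mul_comm]
  -- orthogonality relation
  have hQP : Q * P = (Fintype.card (Γ ⧸ G) : ℂ) • 1 := by
    ext j j'
    rw [Matrix.mul_apply, Matrix.smul_apply, Matrix.one_apply]
    by_cases hjj : j = j'
    · subst hjj
      simp only [hQ, hP, if_pos rfl, smul_eq_mul, mul_one]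
      rw [Finset.sum_congr rfl (fun c _ => by rw [← Units.val_mul, inv_mul_cancel,
        Units.val_one])]
      simp [Finset.card_univ]
    · set ψ : Γ →* ℂˣ := (e j : Γ →* ℂˣ) with hψdef
      set ψ' : Γ →* ℂˣ := (e j' : Γ →* ℂˣ) with hψ'def
      have hker : ∀ g ∈ G, (ψ⁻¹ * ψ') g = 1 := by
        intro g hg
        have h1 := (hΨ _).mp (e j).2 ⟨g, hg⟩
        have h2 := (hΨ _).mp (e j').2 ⟨g, hg⟩
        simp only [MonoidHom.mul_apply, MonoidHom.inv_apply]
        rw [h1, h2, inv_mul_cancel]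
      set φ : (Γ ⧸ G) →* ℂˣ :=
        QuotientGroup.lift G (ψ⁻¹ * ψ') (fun g hg => MonoidHom.mem_ker.mpr (hker g hg))
        with hφdef
      have hφne : φ ≠ 1 := by
        intro hc
        apply hjj
        apply e.injective
        apply Subtype.ext
        show ψ = ψ'
        ext γ
        have := DFunLike.congr_fun hc (QuotientGroup.mk γ)
        rw [hφdef, QuotientGroup.lift_mk'] at this
        simp only [MonoidHom.mul_apply, MonoidHom.inv_apply, MonoidHom.one_apply] at this
        have h3 := congrArg (fun u => (ψ γ) * u) this
        simp only [mul_inv_cancel_left, mul_one] at h3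
        exact_mod_cast h3.symm
      have hsum : ∑ c : Γ ⧸ G, (φ c : ℂ) = 0 := dd_sum_eq_zero hφne
      rw [if_neg hjj, smul_zero]
      calc ∑ c : Γ ⧸ G, Q j c * P c j'
          = ∑ c : Γ ⧸ G, (φ c : ℂ) := by
            refine Finset.sum_congr rfl fun c _ => ?_
            have : φ c = (ψ (s c))⁻¹ * ψ' (s c) := by
              conv_lhs => rw [← hs c]
              rw [hφdef, QuotientGroup.lift_mk']
              rfl
            rw [this, Units.val_mul]
        _ = 0 := hsum
  -- determinant conclusion
  haveI : Nonempty (Γ ⧸ G) := ⟨QuotientGroup.mk 1⟩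
  have hdetP : P.det ≠ 0 := by
    intro h0
    have hd := congrArg Matrix.det hQP
    rw [Matrix.det_mul, h0, mul_zero, Matrix.det_smul, Matrix.det_one, mul_one] at hd
    exact pow_ne_zero _ (Nat.cast_ne_zero.mpr Fintype.card_ne_zero) hd.symm
  have hMD : M.det = D.det := by
    apply mul_right_cancel₀ hdetP
    rw [← Matrix.det_mul, hMP, Matrix.det_mul, mul_comm]
  rw [hMD, hD, Matrix.det_diagonal]
  calc ∏ j : Γ ⧸ G, L (e j)
      = ∏ p : {x // x ∈ Ψ}, L p := Fintype.prod_equiv e _ _ (fun j => rfl)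
    _ = ∏ ψ ∈ Ψ, L ψ := Finset.prod_coe_sort Ψ L
end

section
/- Let Γ be a finite abelian group and f : Γ → ℂ any function. Then the determinant of the square matrix indexed by Γ with entries (σ, σ′) ↦ f(σ′ · σ⁻¹) equals ∏_{ψ} ( Σ_{γ ∈ Γ} f(γ) · ψ(γ) ), where the product runs over all group homomorphisms ψ : Γ → ℂˣ. -/
open Finset

/-- The equivalence between multiplicative characters `Γ →* ℂˣ` and additive characters of
`Additive Γ` with values in `ℂ`. -/
noncomputable def charEquiv (Γ : Type*) [CommGroup Γ] :
    (Γ →* ℂˣ) ≃ AddChar (Additive Γ) ℂ where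
  toFun ψ :=
    { toFun := fun a => (ψ a.toMul : ℂ)
      map_zero_eq_one' := by simp
      map_add_eq_mul' := by intro a b; simp [toMul_add] }
  invFun χ :=
    ((χ.toMonoidHom.comp (MulEquiv.multiplicativeAdditive Γ).symm.toMonoidHom)).toHomUnits
  left_inv ψ := by ext γ; rfl
  right_inv χ := by ext a; rfl

lemma charEquiv_apply {Γ : Type*} [CommGroup Γ] (ψ : Γ →* ℂˣ) (a : Additive Γ) :
    charEquiv Γ ψ a = (ψ a.toMul : ℂ) := rfl

/-- Frobenius determinant relation: for a finite abelian group `Γ` and any `f : Γ → ℂ`,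
the determinant of the matrix `(σ, σ') ↦ f(σ' σ⁻¹)` equals the product, over all characters
`ψ : Γ →* ℂˣ`, of `Σ_γ f(γ) ψ(γ)`. -/
theorem frobenius_determinant
    (Γ : Type*) [CommGroup Γ] [Fintype Γ] [DecidableEq Γ]
    (f : Γ → ℂ)
    (Ψ : Finset (Γ →* ℂˣ)) (hΨ : ∀ ψ : Γ →* ℂˣ, ψ ∈ Ψ) :
    (Matrix.of fun σ σ' : Γ => f (σ' * σ⁻¹)).det = ∏ ψ ∈ Ψ, ∑ γ : Γ, f γ * (ψ γ : ℂ) := by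
  classical
  set N : Matrix (Additive Γ) (Additive Γ) ℂ :=
    Matrix.of fun a b : Additive Γ => f (b.toMul * a.toMul⁻¹) with hN
  set B : Module.Basis (AddChar (Additive Γ) ℂ) ℂ (Additive Γ → ℂ) := AddChar.complexBasis (Additive Γ)
  set lam : AddChar (Additive Γ) ℂ → ℂ := fun χ => ∑ a : Additive Γ, f a.toMul * χ a with hlam
  -- each character is an eigenvector
  have key : ∀ χ : AddChar (Additive Γ) ℂ, N.mulVec ⇑χ = lam χ • ⇑χ := by
    intro χ
    funext a
    calc ∑ b : Additive Γ, f (b.toMul * a.toMul⁻¹) * χ b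
        = ∑ c : Additive Γ, f c.toMul * (χ c * χ a) := by
          refine Fintype.sum_equiv (Equiv.subRight a) _ _ fun c => ?_
          rw [Equiv.subRight_apply, ← AddChar.map_add_eq_mul, sub_add_cancel, toMul_sub, div_eq_mul_inv]
      _ = (∑ c : Additive Γ, f c.toMul * χ c) * χ a := by
          rw [Finset.sum_mul]
          exact Finset.sum_congr rfl fun c _ => by ring
      _ = lam χ * χ a := rfl
  have hB : ∀ χ : AddChar (Additive Γ) ℂ, (B χ : Additive Γ → ℂ) = ⇑χ := fun χ => by
    simp [B, AddChar.complexBasis_apply]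
  have hdiag : LinearMap.toMatrix B B (Matrix.toLin' N) = Matrix.diagonal lam := by
    ext χ φ
    rw [LinearMap.toMatrix_apply]
    have h1 : Matrix.toLin' N (B φ) = lam φ • B φ := by
      rw [hB φ, Matrix.toLin'_apply]
      exact key φ
    rw [h1, map_smul, Module.Basis.repr_self]
    simp only [Finsupp.smul_apply, Finsupp.single_apply, smul_eq_mul,
      Matrix.diagonal, Matrix.of_apply, mul_ite, mul_one, mul_zero]
    split_ifs with h1' h2' h2'
    · rw [h1']
    · exact absurd h1'.symm h2'
    · exact absurd h2'.symm h1'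
    · rfl
  have hMN : (Matrix.of fun σ σ' : Γ => f (σ' * σ⁻¹)).det = N.det := by
    have : N = Matrix.reindex (Additive.ofMul (α := Γ)) Additive.ofMul
        (Matrix.of fun σ σ' : Γ => f (σ' * σ⁻¹)) := rfl
    rw [this, Matrix.det_reindex_self]
  have hdet : N.det = ∏ χ : AddChar (Additive Γ) ℂ, lam χ := by
    rw [← LinearMap.det_toLin' N, ← LinearMap.det_toMatrix B (Matrix.toLin' N), hdiag,
      Matrix.det_diagonal]
  rw [hMN, hdet]
  refine (Finset.prod_bij (fun ψ _ => charEquiv Γ ψ) (fun ψ _ => Finset.mem_univ _)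
    (fun ψ₁ _ ψ₂ _ h => (charEquiv Γ).injective h)
    (fun χ _ => ⟨(charEquiv Γ).symm χ, hΨ _, ((charEquiv Γ).apply_symm_apply χ).symm⟩)
    (fun ψ _ => ?_)).symm
  rw [hlam]
  exact Fintype.sum_equiv (Additive.ofMul (α := Γ)) _ _ fun γ => rfl
end

section
/- Let G be a finite group, N a subgroup of G of index 2, and C a subgroup of G not contained in N. Then for every n ∈ N: |C ∩ N| · #{g ∈ G : g⁻¹·n·g ∈ C} = |C| · #{g ∈ N : g⁻¹·n·g ∈ C ∩ N}. (Equivalently, the restriction to N of the character of Ind_C^G(1) equals the character of Ind_{C∩N}^N(1).) -/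
/-!
If `c ∈ C \ N`, right multiplication by `c` swaps the two cosets of `N`. Both `C` and the set of
`g` with `g⁻¹ n g ∈ C` are stable under it, so each is split evenly between `N` and `G \ N`;
and since `N` is normal, `g⁻¹ n g ∈ C` already means `g⁻¹ n g ∈ C ⊓ N`.
-/

namespace Subgroup

variable {G : Type*} [Group G] {N : Subgroup G}

theorem image_mul_right_inter_eq_diff_of_index_eq_two (hN : N.index = 2) {c : G} (hc : c ∉ N)
    {S : Set G} (hS : ∀ g, g * c ∈ S ↔ g ∈ S) :
    (· * c) '' (S ∩ N) = S \ N := by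
  ext g
  have hSg : g * c⁻¹ ∈ S ↔ g ∈ S := by simpa using (hS (g * c⁻¹)).symm
  have hNg : g * c⁻¹ ∈ N ↔ g ∉ N := by
    rw [mul_mem_iff_of_index_two hN, inv_mem_iff]
    tauto
  rw [Set.image_mul_right, Set.mem_preimage, Set.mem_inter_iff, SetLike.mem_coe, hSg, hNg]
  rfl

theorem ncard_eq_two_mul_ncard_inter_of_index_eq_two (hN : N.index = 2) {c : G} (hc : c ∉ N)
    {S : Set G} (hS : ∀ g, g * c ∈ S ↔ g ∈ S) :
    S.ncard = 2 * (S ∩ N).ncard := by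
  have himage := image_mul_right_inter_eq_diff_of_index_eq_two hN hc hS
  by_cases hfin : (S ∩ N).Finite
  · calc S.ncard = (S ∩ N ∪ S \ N).ncard := by rw [Set.inter_union_sdiff]
      _ = (S ∩ N).ncard + (S \ N).ncard :=
          Set.ncard_union_eq Set.disjoint_sdiff_inter.symm hfin (himage ▸ hfin.image _)
      _ = 2 * (S ∩ N).ncard := by
          rw [← himage, Set.ncard_image_of_injective _ (mul_left_injective c), two_mul]
  · have hSinf : S.Infinite := fun h ↦ hfin (h.subset Set.inter_subset_left)
    rw [hSinf.ncard, Set.Infinite.ncard hfin]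

end Subgroup

theorem induction_restriction_not_le_general
    (G : Type*) [Group G]
    (N C : Subgroup G) (hN : N.index = 2) (hC : ¬ C ≤ N)
    (n : G) (hn : n ∈ N) :
    Nat.card ↥(C ⊓ N) * Nat.card {g : G | g⁻¹ * n * g ∈ C}
      = Nat.card ↥C * Nat.card {g : G | g ∈ N ∧ g⁻¹ * n * g ∈ C ⊓ N} := by
  have hNormal := Subgroup.normal_of_index_eq_two hN
  obtain ⟨c, hcC, hcN⟩ := SetLike.not_le_iff_exists.mp hC
  have hcard_C : Nat.card C = 2 * Nat.card ↥(C ⊓ N) := by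
    rw [← SetLike.coe_sort_coe, Nat.card_coe_set_eq,
      Subgroup.ncard_eq_two_mul_ncard_inter_of_index_eq_two hN hcN
        (fun g ↦ C.mul_mem_cancel_right hcC),
      ← Subgroup.coe_inf, ← Nat.card_coe_set_eq, SetLike.coe_sort_coe]
  have hconj : ∀ g, (g * c)⁻¹ * n * (g * c) ∈ C ↔ g⁻¹ * n * g ∈ C := fun g ↦ by
    rw [show (g * c)⁻¹ * n * (g * c) = c⁻¹ * (g⁻¹ * n * g) * c by group,
      C.mul_mem_cancel_right hcC, C.mul_mem_cancel_left (C.inv_mem hcC)]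
  have hcard_conj : Nat.card {g : G | g⁻¹ * n * g ∈ C}
      = 2 * Nat.card {g : G | g ∈ N ∧ g⁻¹ * n * g ∈ C ⊓ N} := by
    rw [Nat.card_coe_set_eq, Nat.card_coe_set_eq,
      Subgroup.ncard_eq_two_mul_ncard_inter_of_index_eq_two hN hcN hconj]
    congr 2
    ext g
    have hconjN : g⁻¹ * n * g ∈ N := by simpa using hNormal.conj_mem n hn g⁻¹
    simp [Subgroup.mem_inf, hconjN, and_comm]
  rw [hcard_conj, hcard_C]
  ring

/-- Induction–restriction counting identity: if `N` has index 2 in the finite group `G` and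
`C` is a subgroup not contained in `N`, then for every `n ∈ N`,
`|C ∩ N| · #{g ∈ G | g⁻¹ n g ∈ C} = |C| · #{g ∈ N | g⁻¹ n g ∈ C ∩ N}`. -/
theorem induction_restriction_not_le
    (G : Type*) [Group G] [Fintype G]
    (N C : Subgroup G) (hN : N.index = 2) (hC : ¬ C ≤ N)
    (n : G) (hn : n ∈ N) :
    Nat.card ↥(C ⊓ N) * Nat.card {g : G | g⁻¹ * n * g ∈ C}
      = Nat.card ↥C * Nat.card {g : G | g ∈ N ∧ g⁻¹ * n * g ∈ C ⊓ N} :=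
  induction_restriction_not_le_general G N C hN hC n hn
end
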